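/- Let A be an n-DPDA whose input alphabet contains a distinguished symbol ⋆. If R is an infinite run of A reading only ⋆ symbols, then R(i) is a milestone configuration for infinitely many indices i. -/

import Mathlib

namespace HOPDA

/-- Iterated exponentiation `pow` from the paper:
`pow [] = 1`, `pow (m :: l) = (1 + m) ^ pow l - 1`. -/
def pow : List ℕ → ℕ
  | [] => 1
  | m :: l => (1 + m) ^ pow l - 1

/-! ### Higher-order stacks.

Stacks are represented positionlessly (nested lists of symbols); the positions of the
paper are represented by *addresses*: lists of bottom-based indices leading from the
outermost level into the stack.  Equality of contents is positionless equality `≅`. -/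

inductive St (Γ : Type) : Type where
  | leaf (γ : Γ) : St Γ
  | node (l : List (St Γ)) : St Γ

/-- `IsValid k s` : `s` is a stack of order `k` all of whose component stacks are nonempty. -/
def IsValid {Γ : Type} : ℕ → St Γ → Prop
  | 0, St.leaf _ => True
  | 0, St.node _ => False
  | _ + 1, St.leaf _ => False
  | k + 1, St.node l => l ≠ [] ∧ ∀ t ∈ l, IsValid k t

/-- The address of the topmost substack `d` levels below the surface
(indices count from the bottom of each stack, as the positions in the paper do). -/
def topAddr {Γ : Type} : St Γ → ℕ → List ℕ
  | _, 0 => []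
  | St.leaf _, _ + 1 => []
  | St.node l, d + 1 => (l.length - 1) :: topAddr (l.getLastD (St.node [])) d

/-- The substack sitting at a given address. -/
def sub? {Γ : Type} : St Γ → List ℕ → Option (St Γ)
  | s, [] => some s
  | St.leaf _, _ :: _ => none
  | St.node l, i :: p =>
      match l[i]? with
      | some t => sub? t p
      | none => none

/-- Modify the substack at a given address. -/
def modAt {Γ : Type} : St Γ → List ℕ → (St Γ → Option (St Γ)) → Option (St Γ)
  | s, [], f => f s
  | St.leaf _, _ :: _, _ => none
  | St.node l, i :: p, f =>
      match l[i]? with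
      | none => none
      | some t =>
          match modAt t p f with
          | none => none
          | some t' => some (St.node (l.set i t'))

/-- The topmost stack symbol of an order-`n` stack. -/
def topLeaf? {Γ : Type} (n : ℕ) (s : St Γ) : Option Γ :=
  match sub? s (topAddr s n) with
  | some (St.leaf γ) => some γ
  | _ => none

/-- The content of the topmost `k`-stack of an order-`n` stack (`top^k`);
equality of these contents is positionless equality `≅` of topmost `k`-stacks. -/
def topStk {Γ : Type} (n : ℕ) (s : St Γ) (k : ℕ) : Option (St Γ) :=
  sub? s (topAddr s (n - k))

/-- Number of components of the (composite) stack at the given address. -/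
def sizeAt {Γ : Type} (s : St Γ) (p : List ℕ) : ℕ :=
  match sub? s p with
  | some (St.node l) => l.length
  | _ => 0

/-- Remove the topmost component of a composite stack
(defined only when it has at least two components). -/
def popStk {Γ : Type} : St Γ → Option (St Γ)
  | St.node l => if 2 ≤ l.length then some (St.node l.dropLast) else none
  | St.leaf _ => none

/-- Duplicate the topmost `(r-1)`-stack of an `r`-stack,
replacing the topmost symbol of the new copy by `γ`. -/
def dupTop {Γ : Type} (r : ℕ) (γ : Γ) : St Γ → Option (St Γ)
  | St.node l =>
      match l.getLast? with
      | none => none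
      | some t =>
          match modAt t (topAddr t (r - 1)) (fun u =>
            match u with
            | St.leaf _ => some (St.leaf γ)
            | St.node _ => none) with
          | none => none
          | some t' => some (St.node (l ++ [t']))
  | St.leaf _ => none

/-- `push^r_γ` on an order-`n` stack. -/
def pushOp {Γ : Type} (n r : ℕ) (γ : Γ) (s : St Γ) : Option (St Γ) :=
  modAt s (topAddr s (n - r)) (dupTop r γ)

/-- `pop^r` on an order-`n` stack. -/
def popOp {Γ : Type} (n r : ℕ) (s : St Γ) : Option (St Γ) :=
  modAt s (topAddr s (n - r)) popStk

/-- Stack operations of an order-`n` pushdown automaton. -/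
inductive Op (Γ : Type) where
  | pop (k : ℕ)
  | push (k : ℕ) (γ : Γ)

def applyOp {Γ : Type} (n : ℕ) : Op Γ → St Γ → Option (St Γ)
  | Op.pop k, s => if 1 ≤ k ∧ k ≤ n then popOp n k s else none
  | Op.push k γ, s => if 1 ≤ k ∧ k ≤ n then pushOp n k γ s else none

/-- The one-step history function on addresses: for the address of a substack of
`op(s)` it returns the address of the substack of `s` from which it originates. -/
def histStep {Γ : Type} (n : ℕ) : Op Γ → St Γ → List ℕ → List ℕ
  | Op.pop _, _, p => p
  | Op.push r _, s, p =>
      let m := n - r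
      let ta := topAddr s m
      let sz := sizeAt s ta
      if p.take (m + 1) = ta ++ [sz] then p.set m (sz - 1) else p

/-! ### Deterministic order-`n` pushdown automata -/

inductive Trans (A Γ Q : Type) where
  | read (f : A → Q)
  | op (q : Q) (o : Op Γ)

/-- A deterministic order-`n` pushdown automaton. -/
structure DPDA (n : ℕ) (A Γ : Type) where
  Q : Type
  finQ : Finite Q
  qI : Q
  γI : Γ
  F : Set Q
  δ : Q → Γ → Trans A Γ Q
  read_inj : ∀ q γ f, δ q γ = Trans.read f → Function.Injective f

/-- One step of an `n`-DPDA; the label records the letter read (if any). -/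
inductive Step {n : ℕ} {A Γ : Type} (D : DPDA n A Γ) :
    D.Q × St Γ → Option A → D.Q × St Γ → Prop where
  | read {q : D.Q} {s : St Γ} {γ : Γ} {f : A → D.Q} (a : A) :
      IsValid n s → topLeaf? n s = some γ → D.δ q γ = Trans.read f →
      Step D (q, s) (some a) (f a, s)
  | op {q : D.Q} {s s' : St Γ} {γ : Γ} {q' : D.Q} {o : Op Γ} :
      IsValid n s → topLeaf? n s = some γ → D.δ q γ = Trans.op q' o →
      applyOp n o s = some s' →
      Step D (q, s) none (q', s')

/-- A (finite) run `R(0), …, R(len)` of an `n`-DPDA. -/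
structure Run {n : ℕ} {A Γ : Type} (D : DPDA n A Γ) where
  len : ℕ
  cfg : ℕ → D.Q × St Γ
  lab : ℕ → Option A
  ok : ∀ i < len, Step D (cfg i) (lab i) (cfg (i + 1))

namespace Run

variable {n : ℕ} {A Γ : Type} {D : DPDA n A Γ}

/-- The word read by a run. -/
def word (R : Run D) : List A := (List.range R.len).filterMap R.lab

/-- The subrun `R[i,j]`. -/
def sub (R : Run D) (i j : ℕ) : Run D where
  len := min j R.len - i
  cfg := fun t => R.cfg (i + t)
  lab := fun t => R.lab (i + t)
  ok := fun t ht => R.ok (i + t) (by omega)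

/-- The history function of the single step starting at position `j` of the run. -/
def stepHist (R : Run D) (j : ℕ) : List ℕ → List ℕ :=
  match topLeaf? n (R.cfg j).2 with
  | none => id
  | some γ =>
      match D.δ (R.cfg j).1 γ with
      | Trans.read _ => id
      | Trans.op _ o => histStep n o (R.cfg j).2

/-- `histTo R i j p` : the address in `R(i)` of the origin (history) of the substack
of `R(j)` sitting at address `p` (meaningful for `i ≤ j ≤ R.len`). -/
def histTo (R : Run D) (i : ℕ) : ℕ → List ℕ → List ℕ
  | 0, p => p
  | j + 1, p => if j + 1 ≤ i then p else histTo R i j (stepHist R j p)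

/-- A run is `k`-upper when the topmost `k`-stack at its end originates from
the topmost `k`-stack at its start. -/
def IsUpper (R : Run D) (k : ℕ) : Prop :=
  histTo R 0 R.len (topAddr (R.cfg R.len).2 (n - k)) = topAddr (R.cfg 0).2 (n - k)

/-- A run is a `k`-return when the topmost `(k-1)`-stack at its end originates from the
topmost `(k-1)`-stack of `pop^k` of its starting stack, and no suffix is `(k-1)`-upper. -/
def IsReturn (R : Run D) (k : ℕ) : Prop :=
  (histTo R 0 R.len (topAddr (R.cfg R.len).2 (n - (k - 1))) =
    topAddr (R.cfg 0).2 (n - k) ++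
      [sizeAt (R.cfg 0).2 (topAddr (R.cfg 0).2 (n - k)) - 2]) ∧
  ∀ i < R.len, ¬ (R.sub i R.len).IsUpper (k - 1)

end Run

/-- `R` is the composition `S ∘ T` of the runs `S` and `T`. -/
def IsComp {n : ℕ} {A Γ : Type} {D : DPDA n A Γ} (R S T : Run D) : Prop :=
  S.cfg S.len = T.cfg 0 ∧ R.len = S.len + T.len ∧
  (∀ i ≤ S.len, R.cfg i = S.cfg i) ∧ (∀ i < S.len, R.lab i = S.lab i) ∧
  (∀ i ≤ T.len, R.cfg (S.len + i) = T.cfg i) ∧ (∀ i < T.len, R.lab (S.len + i) = T.lab i)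

/-- `Decomp R k r c` : `c 0 < c 1 < … < c r` are the cut points of the (unique)
decomposition of the `k`-upper run `R` into the maximal number of nonempty
`k`-upper runs. -/
def Decomp {n : ℕ} {A Γ : Type} {D : DPDA n A Γ} (R : Run D) (k r : ℕ) (c : ℕ → ℕ) : Prop :=
  c 0 = 0 ∧ c r = R.len ∧ (∀ j < r, c j < c (j + 1)) ∧ (∀ j ≤ r, c j ≤ R.len) ∧
  (∀ j < r, (R.sub (c j) (c (j + 1))).IsUpper k) ∧
  (∀ j < r, ∀ i, c j < i → i < c (j + 1) → ¬ (R.sub i (c (j + 1))).IsUpper k)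

/-- The image under the morphism generated by `φ` of a word. -/
def phiW {A M : Type} [Monoid M] (φ : A → M) (w : List A) : M := (w.map φ).prod

/-- The two `k`-upper runs `R` and `S` are `(k,φ)`-parallel. -/
def Parallel {n : ℕ} {A Γ M : Type} [Monoid M] {D : DPDA n A Γ}
    (φ : A → M) (R S : Run D) (k : ℕ) : Prop :=
  R.IsUpper k ∧ S.IsUpper k ∧
  topStk n (R.cfg R.len).2 k = topStk n (S.cfg S.len).2 k ∧
  ∃ (r : ℕ) (cR cS : ℕ → ℕ), Decomp R k r cR ∧ Decomp S k r cS ∧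
    ∀ j < r,
      phiW φ (R.sub (cR j) (cR (j + 1))).word = phiW φ (S.sub (cS j) (cS (j + 1))).word ∧
      topStk n (R.cfg (cR j)).2 k = topStk n (S.cfg (cS j)).2 k

/-- An infinite run of an `n`-DPDA. -/
structure InfRun {n : ℕ} {A Γ : Type} (D : DPDA n A Γ) where
  cfg : ℕ → D.Q × St Γ
  lab : ℕ → Option A
  ok : ∀ i, Step D (cfg i) (lab i) (cfg (i + 1))

/-- The finite subrun `R[i,j]` of an infinite run. -/
def InfRun.sub {n : ℕ} {A Γ : Type} {D : DPDA n A Γ} (R : InfRun D) (i j : ℕ) : Run D where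
  len := j - i
  cfg := fun t => R.cfg (i + t)
  lab := fun t => R.lab (i + t)
  ok := fun t _ => R.ok (i + t)

/-- A step label reads nothing, or reads the `star` symbol. -/
def OnlyStar {A : Type} (star : A) (o : Option A) : Prop := o = none ∨ o = some star

/-- Milestone configurations. -/
def Milestone {n : ℕ} {A Γ : Type} {D : DPDA n A Γ} (star : A) (c : D.Q × St Γ) : Prop :=
  ∃ R : InfRun D, R.cfg 0 = c ∧ (∀ i, OnlyStar star (R.lab i)) ∧
    ∃ I : Set ℕ, I.Infinite ∧ 0 ∈ I ∧ ∀ i ∈ I, ∀ j ∈ I, i ≤ j → (R.sub i j).IsUpper 0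

/-- The initial order-`n` stack, containing the single symbol `γ`. -/
def initStack (n : ℕ) {Γ : Type} (γ : Γ) : St Γ :=
  Nat.rec (motive := fun _ => St Γ) (St.leaf γ) (fun _ s => St.node [s]) n

def initCfg {n : ℕ} {A Γ : Type} (D : DPDA n A Γ) : D.Q × St Γ := (D.qI, initStack n D.γI)

/-- The language recognized by an `n`-DPDA. -/
def Lang {n : ℕ} {A Γ : Type} (D : DPDA n A Γ) : Set (List A) :=
  { w | ∃ R : Run D, R.cfg 0 = initCfg D ∧ R.word = w ∧ (R.cfg R.len).1 ∈ D.F }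

/-! ### Deterministic order-2 collapsible pushdown automata -/

/-- Stack operations of an order-2 collapsible pushdown automaton. -/
inductive COp (Γ : Type) where
  | pop1
  | pop2
  | push1 (γ : Γ)
  | push2 (γ : Γ)
  | collapse

/-- An order-2 collapsible stack: a list of 1-stacks (topmost first), each a list of
0-stacks (topmost first) storing a symbol and the collapse link (a natural number). -/
abbrev CStk (Γ : Type) := List (List (Γ × ℕ))

/-- Semantics of the order-2 collapsible stack operations. -/
def capply {Γ : Type} : COp Γ → CStk Γ → Option (CStk Γ)
  | COp.pop1, (_ :: x :: t) :: rest => some ((x :: t) :: rest)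
  | COp.pop1, _ => none
  | COp.pop2, _ :: s :: rest => some (s :: rest)
  | COp.pop2, _ => none
  | COp.push1 γ, (x :: t) :: rest => some (((γ, rest.length + 1) :: x :: t) :: rest)
  | COp.push1 _, _ => none
  | COp.push2 γ, ((x, m) :: t) :: rest => some (((γ, m) :: t) :: ((x, m) :: t) :: rest)
  | COp.push2 _, _ => none
  | COp.collapse, ((x, m) :: t) :: rest =>
      if 1 ≤ m - 1 ∧ m - 1 ≤ rest.length + 1 then
        some ((((x, m) :: t) :: rest).drop (rest.length + 1 - (m - 1)))
      else none
  | COp.collapse, _ => none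

/-- The topmost stack symbol of an order-2 collapsible stack. -/
def ctop? {Γ : Type} : CStk Γ → Option Γ
  | ((γ, _) :: _) :: _ => some γ
  | _ => none

inductive CTrans (A Γ Q : Type) where
  | read (f : A → Q)
  | op (q : Q) (o : COp Γ)

/-- A deterministic order-2 collapsible pushdown automaton. -/
structure CPDA2 (A Γ : Type) where
  Q : Type
  finQ : Finite Q
  qI : Q
  γI : Γ
  F : Set Q
  δ : Q → Γ → CTrans A Γ Q
  read_inj : ∀ q γ f, δ q γ = CTrans.read f → Function.Injective f

inductive CStep {A Γ : Type} (D : CPDA2 A Γ) :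
    D.Q × CStk Γ → Option A → D.Q × CStk Γ → Prop where
  | read {q : D.Q} {s : CStk Γ} {γ : Γ} {f : A → D.Q} (a : A) :
      ctop? s = some γ → D.δ q γ = CTrans.read f → CStep D (q, s) (some a) (f a, s)
  | op {q : D.Q} {s s' : CStk Γ} {γ : Γ} {q' : D.Q} {o : COp Γ} :
      ctop? s = some γ → D.δ q γ = CTrans.op q' o → capply o s = some s' →
      CStep D (q, s) none (q', s')

structure CRun {A Γ : Type} (D : CPDA2 A Γ) where
  len : ℕ
  cfg : ℕ → D.Q × CStk Γ
  lab : ℕ → Option A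
  ok : ∀ i < len, CStep D (cfg i) (lab i) (cfg (i + 1))

def CRun.word {A Γ : Type} {D : CPDA2 A Γ} (R : CRun D) : List A :=
  (List.range R.len).filterMap R.lab

def cinitCfg {A Γ : Type} (D : CPDA2 A Γ) : D.Q × CStk Γ := (D.qI, [[(D.γI, 1)]])

/-- The language recognized by a 2-DCPDA. -/
def CLang {A Γ : Type} (D : CPDA2 A Γ) : Set (List A) :=
  { w | ∃ R : CRun D, R.cfg 0 = cinitCfg D ∧ R.word = w ∧ (R.cfg R.len).1 ∈ D.F }

/-! ### The alphabet `{[, ], ⋆, ♯}`, the function `stars`, and the language `U` -/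

inductive Alph : Type where
  | lb    -- the opening bracket [
  | rb    -- the closing bracket ]
  | star  -- ⋆
  | sharp -- ♯
  deriving DecidableEq

instance : Fintype Alph :=
  ⟨{Alph.lb, Alph.rb, Alph.star, Alph.sharp}, fun x => by cases x <;> simp⟩

/-- Processes a word over `{[, ], ⋆}`, keeping the total number of stars read so far and,
for each currently unmatched opening bracket (most recent first), the number of stars
read before it; returns `none` iff some prefix has more `]` than `[`. -/
def starsAux : List Alph → ℕ → List ℕ → Option (List ℕ)
  | [], _, st => some st
  | Alph.star :: w, cnt, st => starsAux w (cnt + 1) st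
  | Alph.lb :: w, cnt, st => starsAux w cnt (cnt :: st)
  | Alph.rb :: w, cnt, st =>
      match st with
      | [] => none
      | _ :: st' => starsAux w cnt st'
  | Alph.sharp :: _, _, _ => none

/-- `stars w` : `0` if some prefix of `w` has more closing than opening brackets, or if
`w` has equally many opening and closing brackets; otherwise the number of `⋆`s in `w`
before the last opening bracket of `w` not matched by a closing bracket. -/
def stars (w : List Alph) : ℕ :=
  match starsAux w 0 [] with
  | some (c :: _) => c
  | _ => 0

/-- The language `U = { w ♯^(stars(w)+1) | w ∈ {[, ], ⋆}* }`. -/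
def U : Set (List Alph) :=
  { u | ∃ w : List Alph, Alph.sharp ∉ w ∧ u = w ++ List.replicate (stars w + 1) Alph.sharp }

/-! ### Tree-generating pushdown systems -/

inductive TTrans (A Γ Q : Type) where
  | branch (a : A) (next : ℕ → Q)
  | op (q : Q) (o : Op Γ)

/-- A deterministic tree-generating order-`n` pushdown system (without collapse)
over the ranked alphabet `(A, rank)`. -/
structure TreePDA (n : ℕ) (A Γ : Type) (rank : A → ℕ) where
  Q : Type
  finQ : Finite Q
  qI : Q
  γI : Γ
  δ : Q → Γ → TTrans A Γ Q
  branch_inj : ∀ q γ a next, δ q γ = TTrans.branch a next →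
      ∀ i j, i < rank a → j < rank a → next i = next j → i = j

/-- One step of a tree-generating `n`-PDS; the label records the child chosen
at a branch step (if any). -/
inductive TStep {n : ℕ} {A Γ : Type} {rank : A → ℕ} (D : TreePDA n A Γ rank) :
    D.Q × St Γ → Option ℕ → D.Q × St Γ → Prop where
  | branch {q : D.Q} {s : St Γ} {γ : Γ} {a : A} {next : ℕ → D.Q} {i : ℕ} :
      IsValid n s → topLeaf? n s = some γ → D.δ q γ = TTrans.branch a next → i < rank a →
      TStep D (q, s) (some i) (next i, s)
  | op {q : D.Q} {s s' : St Γ} {γ : Γ} {q' : D.Q} {o : Op Γ} :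
      IsValid n s → topLeaf? n s = some γ → D.δ q γ = TTrans.op q' o →
      applyOp n o s = some s' →
      TStep D (q, s) none (q', s')

def TReach {n : ℕ} {A Γ : Type} {rank : A → ℕ} (D : TreePDA n A Γ rank) :
    D.Q × St Γ → D.Q × St Γ → Prop :=
  Relation.ReflTransGen (fun c c' => ∃ o, TStep D c o c')

def TOpReach {n : ℕ} {A Γ : Type} {rank : A → ℕ} (D : TreePDA n A Γ rank) :
    D.Q × St Γ → D.Q × St Γ → Prop :=
  Relation.ReflTransGen (fun c c' => TStep D c none c')

/-- `c` is a configuration at which a `branch(a,…)` transition applies. -/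
def TIsBr {n : ℕ} {A Γ : Type} {rank : A → ℕ} (D : TreePDA n A Γ rank)
    (c : D.Q × St Γ) (a : A) : Prop :=
  ∃ γ next, IsValid n c.2 ∧ topLeaf? n c.2 = some γ ∧ D.δ c.1 γ = TTrans.branch a next

/-- `TFollow D c p c'` : starting from the branch configuration `c` and following
the child choices `p` (each branch step being followed by op steps up to the next
branch configuration) one arrives at the branch configuration `c'`. -/
inductive TFollow {n : ℕ} {A Γ : Type} {rank : A → ℕ} (D : TreePDA n A Γ rank) :
    D.Q × St Γ → List ℕ → D.Q × St Γ → Prop where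
  | nil (c : D.Q × St Γ) : TFollow D c [] c
  | cons {c c₁ c₂ c₃ : D.Q × St Γ} {i : ℕ} {p : List ℕ} :
      TStep D c (some i) c₁ → TOpReach D c₁ c₂ → (∃ a, TIsBr D c₂ a) →
      TFollow D c₂ p c₃ → TFollow D c (i :: p) c₃

def tinitCfg {n : ℕ} {A Γ : Type} {rank : A → ℕ} (D : TreePDA n A Γ rank) : D.Q × St Γ :=
  (D.qI, initStack n D.γI)

/-- `D` generates the ranked tree whose labelling function is `t`
(`t p = some a` iff the node at position `p` exists and is labelled `a`). -/
def TGenerates {n : ℕ} {A Γ : Type} {rank : A → ℕ} (D : TreePDA n A Γ rank)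
    (t : List ℕ → Option A) : Prop :=
  (∀ c, TReach D (tinitCfg D) c → ∃ c' a, TReach D c c' ∧ TIsBr D c' a) ∧
  ∃ c₀, TOpReach D (tinitCfg D) c₀ ∧ (∃ a, TIsBr D c₀ a) ∧
    ∀ p a, t p = some a ↔ ∃ c, TFollow D c₀ p c ∧ TIsBr D c a

/-! ### Tree-generating order-2 collapsible pushdown systems -/

inductive CTTrans (A Γ Q : Type) where
  | branch (a : A) (next : ℕ → Q)
  | op (q : Q) (o : COp Γ)

structure CTreePDA (A Γ : Type) (rank : A → ℕ) where
  Q : Type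
  finQ : Finite Q
  qI : Q
  γI : Γ
  δ : Q → Γ → CTTrans A Γ Q
  branch_inj : ∀ q γ a next, δ q γ = CTTrans.branch a next →
      ∀ i j, i < rank a → j < rank a → next i = next j → i = j

inductive CTStep {A Γ : Type} {rank : A → ℕ} (D : CTreePDA A Γ rank) :
    D.Q × CStk Γ → Option ℕ → D.Q × CStk Γ → Prop where
  | branch {q : D.Q} {s : CStk Γ} {γ : Γ} {a : A} {next : ℕ → D.Q} {i : ℕ} :
      ctop? s = some γ → D.δ q γ = CTTrans.branch a next → i < rank a →
      CTStep D (q, s) (some i) (next i, s)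
  | op {q : D.Q} {s s' : CStk Γ} {γ : Γ} {q' : D.Q} {o : COp Γ} :
      ctop? s = some γ → D.δ q γ = CTTrans.op q' o → capply o s = some s' →
      CTStep D (q, s) none (q', s')

def CTReach {A Γ : Type} {rank : A → ℕ} (D : CTreePDA A Γ rank) :
    D.Q × CStk Γ → D.Q × CStk Γ → Prop :=
  Relation.ReflTransGen (fun c c' => ∃ o, CTStep D c o c')

def CTOpReach {A Γ : Type} {rank : A → ℕ} (D : CTreePDA A Γ rank) :
    D.Q × CStk Γ → D.Q × CStk Γ → Prop :=
  Relation.ReflTransGen (fun c c' => CTStep D c none c')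

def CTIsBr {A Γ : Type} {rank : A → ℕ} (D : CTreePDA A Γ rank)
    (c : D.Q × CStk Γ) (a : A) : Prop :=
  ∃ γ next, ctop? c.2 = some γ ∧ D.δ c.1 γ = CTTrans.branch a next

inductive CTFollow {A Γ : Type} {rank : A → ℕ} (D : CTreePDA A Γ rank) :
    D.Q × CStk Γ → List ℕ → D.Q × CStk Γ → Prop where
  | nil (c : D.Q × CStk Γ) : CTFollow D c [] c
  | cons {c c₁ c₂ c₃ : D.Q × CStk Γ} {i : ℕ} {p : List ℕ} :
      CTStep D c (some i) c₁ → CTOpReach D c₁ c₂ → (∃ a, CTIsBr D c₂ a) →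
      CTFollow D c₂ p c₃ → CTFollow D c (i :: p) c₃

def ctinitCfg {A Γ : Type} {rank : A → ℕ} (D : CTreePDA A Γ rank) : D.Q × CStk Γ :=
  (D.qI, [[(D.γI, 1)]])

/-- The order-2 collapsible pushdown system `D` generates the ranked tree whose
labelling function is `t`. -/
def CTGenerates {A Γ : Type} {rank : A → ℕ} (D : CTreePDA A Γ rank)
    (t : List ℕ → Option A) : Prop :=
  (∀ c, CTReach D (ctinitCfg D) c → ∃ c' a, CTReach D c c' ∧ CTIsBr D c' a) ∧
  ∃ c₀, CTOpReach D (ctinitCfg D) c₀ ∧ (∃ a, CTIsBr D c₀ a) ∧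
    ∀ p a, t p = some a ↔ ∃ c, CTFollow D c₀ p c ∧ CTIsBr D c a

/-!
A family of times `g 0 < g 1 < ⋯` such that every `R[g t, g u]` is `(n - ℓ)`-upper exists for
`ℓ = 0` (all times) and, by induction, for `ℓ = n`. Every member of a `0`-upper family is a
milestone, witnessed by the run from it and the later members.

For the step from `ℓ` to `ℓ + 1`, trace the index of the topmost `(n - ℓ - 1)`-stack of `R(g u)`
back to `R(g t)`. It lands in the topmost `(n - ℓ)`-stack of `R(g t)`, and going back in time it
only changes, by one, at a push creating the traced stack. So it is antitone in `u`, and after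
thinning the family it is a number `E t` independent of `u`. The last moment in `[g u, g (u + 1)]`
at which the traced index of the top of `R(g (u + 1))` is `E (u + 1)` starts an
`(n - ℓ - 1)`-upper run to `g (u + 1)`, and as the index `E (u + 1)` is not moved afterwards,
these moments are pairwise `(n - ℓ - 1)`-upper.
-/

lemma exists_last_eq_of_le_succ {f : ℕ → ℕ} {a b e : ℕ} (hab : a ≤ b)
    (hf : ∀ σ < b, f (σ + 1) ≤ f σ + 1) (ha : f a ≤ e) (hb : e ≤ f b) :
    ∃ σ, a ≤ σ ∧ σ ≤ b ∧ f σ = e ∧ ∀ σ', σ < σ' → σ' ≤ b → e < f σ' := by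
  classical
  obtain ⟨σ, hσ⟩ : ∃ σ, Nat.findGreatest (f · ≤ e) b = σ := ⟨_, rfl⟩
  have hle : f σ ≤ e := hσ ▸ Nat.findGreatest_spec (P := (f · ≤ e)) hab ha
  have hgt : ∀ σ', σ < σ' → σ' ≤ b → e < f σ' := fun σ' h₁ h₂ =>
    not_le.mp (Nat.findGreatest_is_greatest (P := (f · ≤ e)) (hσ ▸ h₁) h₂)
  have hσb : σ ≤ b := hσ ▸ Nat.findGreatest_le b
  refine ⟨σ, hσ ▸ Nat.le_findGreatest hab ha, hσb, le_antisymm hle ?_, hgt⟩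
  rcases hσb.eq_or_lt with rfl | hlt
  · exact hb
  · have h₁ := hgt (σ + 1) (by omega) hlt
    have h₂ := hf σ hlt
    omega

lemma exists_strictMono_forall_le (N : ℕ → ℕ) :
    ∃ h : ℕ → ℕ, StrictMono h ∧ ∀ s s', s < s' → N (h s) ≤ h s' := by
  let h : ℕ → ℕ := fun s => Nat.rec 0 (fun _ p => max (p + 1) (N p)) s
  have hsucc : ∀ s, h (s + 1) = max (h s + 1) (N (h s)) := fun _ => rfl
  have hmono : StrictMono h := strictMono_nat_of_lt_succ fun s => by rw [hsucc]; omega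
  refine ⟨h, hmono, fun s s' hss => ?_⟩
  calc N (h s) ≤ h (s + 1) := by rw [hsucc]; omega
    _ ≤ h s' := hmono.monotone hss

section Stacks

variable {Γ : Type}

lemma getElem?_length_sub_one_eq_getLastD {α : Type} {l : List α} (d : α) (h : l ≠ []) :
    l[l.length - 1]? = some (l.getLastD d) := by
  rw [← List.getLast?_eq_getElem?, List.getLastD_eq_getLast?, List.getLast?_eq_some_getLast h]
  rfl

lemma IsValid.exists_node {k : ℕ} {s : St Γ} (hs : IsValid (k + 1) s) :
    ∃ l, s = St.node l ∧ l ≠ [] ∧ ∀ t ∈ l, IsValid k t := by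
  cases s with
  | leaf γ => exact absurd hs (by simp [IsValid])
  | node l => exact ⟨l, rfl, hs.1, hs.2⟩

lemma IsValid.exists_getLastD {k : ℕ} {s : St Γ} (hs : IsValid (k + 1) s) :
    ∃ l, s = St.node l ∧ l[l.length - 1]? = some (l.getLastD (St.node [])) ∧
      IsValid k (l.getLastD (St.node [])) := by
  obtain ⟨l, rfl, hne, hall⟩ := hs.exists_node
  have hlast := getElem?_length_sub_one_eq_getLastD (St.node []) hne
  exact ⟨l, rfl, hlast, hall _ (List.mem_of_getElem? hlast)⟩

lemma IsValid.length_topAddr {k d : ℕ} {s : St Γ} (hs : IsValid k s) (hd : d ≤ k) :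
    (topAddr s d).length = d := by
  induction d generalizing s k with
  | zero => simp [topAddr]
  | succ d ih =>
    obtain ⟨k, rfl⟩ : ∃ k', k = k' + 1 := ⟨k - 1, by omega⟩
    obtain ⟨l, rfl, -, hv⟩ := hs.exists_getLastD
    simp only [topAddr, List.length_cons, ih hv (by omega)]

lemma IsValid.exists_sub?_topAddr {k d : ℕ} {s : St Γ} (hs : IsValid k s) (hd : d ≤ k) :
    ∃ u, sub? s (topAddr s d) = some u ∧ IsValid (k - d) u := by
  induction d generalizing s k with
  | zero => exact ⟨s, rfl, hs⟩
  | succ d ih =>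
    obtain ⟨k, rfl⟩ : ∃ k', k = k' + 1 := ⟨k - 1, by omega⟩
    obtain ⟨l, rfl, hlast, hv⟩ := hs.exists_getLastD
    obtain ⟨u, hu, hvu⟩ := ih hv (by omega)
    exact ⟨u, by simpa only [topAddr, sub?, hlast] using hu, by simpa using hvu⟩

lemma sizeAt_node_cons {l : List (St Γ)} {i : ℕ} {t : St Γ} (h : l[i]? = some t) (q : List ℕ) :
    sizeAt (St.node l) (i :: q) = sizeAt t q := by
  simp [sizeAt, sub?, h]

lemma IsValid.topAddr_succ {k d : ℕ} {s : St Γ} (hs : IsValid k s) (hd : d < k) :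
    topAddr s (d + 1) = topAddr s d ++ [sizeAt s (topAddr s d) - 1] := by
  induction d generalizing s k with
  | zero =>
    obtain ⟨k, rfl⟩ : ∃ k', k = k' + 1 := ⟨k - 1, by omega⟩
    obtain ⟨l, rfl, -, -⟩ := hs.exists_node
    simp [topAddr, sizeAt, sub?]
  | succ d ih =>
    obtain ⟨k, rfl⟩ : ∃ k', k = k' + 1 := ⟨k - 1, by omega⟩
    obtain ⟨l, rfl, hlast, hv⟩ := hs.exists_getLastD
    simp only [topAddr, List.cons_append, ih hv (by omega), sizeAt_node_cons hlast]

lemma sub?_append (s : St Γ) (p q : List ℕ) :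
    sub? s (p ++ q) = (sub? s p).bind (sub? · q) := by
  induction p generalizing s with
  | nil => rfl
  | cons i p ih =>
    cases s with
    | leaf γ => rfl
    | node l =>
      simp only [List.cons_append, sub?]
      cases l[i]? with
      | none => rfl
      | some t => exact ih t

lemma lt_sizeAt_of_sub?_append_singleton {s u : St Γ} {w : List ℕ} {c : ℕ}
    (h : sub? s (w ++ [c]) = some u) : c < sizeAt s w := by
  rw [sub?_append] at h
  rcases hw : sub? s w with _ | ⟨_ | l⟩ <;> simp only [hw, sub?, Option.bind, reduceCtorEq] at h
  cases hc : l[c]? with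
  | none => simp [hc] at h
  | some t => simpa [sizeAt, hw] using (List.getElem?_eq_some_iff.mp hc).1

end Stacks

section Modify

variable {Γ : Type}

def IsAddr (s : St Γ) (p : List ℕ) : Prop := ∃ u, sub? s p = some u

lemma isAddr_node_cons {l : List (St Γ)} {i : ℕ} {p : List ℕ} :
    IsAddr (St.node l) (i :: p) ↔ ∃ t, l[i]? = some t ∧ IsAddr t p := by
  unfold IsAddr
  rcases h : l[i]? <;> simp [sub?, h]

lemma modAt_cons_eq_some {s s' : St Γ} {i : ℕ} {q : List ℕ} {f : St Γ → Option (St Γ)}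
    (h : modAt s (i :: q) f = some s') :
    ∃ l t t', s = St.node l ∧ l[i]? = some t ∧ modAt t q f = some t' ∧
      s' = St.node (l.set i t') := by
  rcases s with _ | l
  · simp [modAt] at h
  rcases hi : l[i]? with _ | t
  · simp [modAt, hi] at h
  rcases hm : modAt t q f with _ | t'
  · simp [modAt, hi, hm] at h
  simp only [modAt, hi, hm, Option.some.injEq] at h
  exact ⟨l, t, t', rfl, hi, hm, h.symm⟩

lemma isAddr_set_cons {l : List (St Γ)} {i j : ℕ} {t t' : St Γ} {p : List ℕ}
    (hi : l[i]? = some t) (hp : IsAddr (St.node (l.set i t')) (j :: p)) :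
    (j = i ∧ IsAddr t' p) ∨ (j ≠ i ∧ IsAddr (St.node l) (j :: p)) := by
  obtain ⟨t₁, hj, hp⟩ := isAddr_node_cons.mp hp
  by_cases hij : j = i
  · subst hij
    rw [List.getElem?_set_self (List.getElem?_eq_some_iff.mp hi).1] at hj
    cases hj
    exact Or.inl ⟨rfl, hp⟩
  · rw [List.getElem?_set_ne (Ne.symm hij)] at hj
    exact Or.inr ⟨hij, isAddr_node_cons.mpr ⟨t₁, hj, hp⟩⟩

lemma sub?_modAt {s s' : St Γ} {q : List ℕ} {f : St Γ → Option (St Γ)}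
    (h : modAt s q f = some s') :
    ∃ u u', sub? s q = some u ∧ f u = some u' ∧ sub? s' q = some u' := by
  induction q generalizing s s' with
  | nil => exact ⟨s, s', rfl, by cases s <;> exact h, rfl⟩
  | cons i q ih =>
    obtain ⟨l, t, t', rfl, hi, hm, rfl⟩ := modAt_cons_eq_some h
    obtain ⟨u, u', h₁, h₂, h₃⟩ := ih hm
    have hil : i < l.length := (List.getElem?_eq_some_iff.mp hi).1
    exact ⟨u, u', by simp [sub?, hi, h₁], h₂, by simp [sub?, List.getElem?_set_self hil, h₃]⟩

lemma IsAddr.of_modAt {s s' : St Γ} {q p : List ℕ} {f : St Γ → Option (St Γ)}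
    (hf : ∀ u u', f u = some u' → ∀ p, IsAddr u' p → IsAddr u p)
    (h : modAt s q f = some s') (hp : IsAddr s' p) : IsAddr s p := by
  induction q generalizing s s' p with
  | nil => exact hf s s' (by cases s <;> exact h) p hp
  | cons i q ih =>
    obtain ⟨l, t, t', rfl, hi, hm, rfl⟩ := modAt_cons_eq_some h
    rcases p with _ | ⟨j, p⟩
    · exact ⟨_, rfl⟩
    rcases isAddr_set_cons hi hp with ⟨rfl, hj⟩ | ⟨-, hj⟩
    · exact isAddr_node_cons.mpr ⟨t, hi, ih hm hj⟩
    · exact hj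

lemma IsAddr.of_modAt_popStk {s s' : St Γ} {q p : List ℕ} (h : modAt s q popStk = some s')
    (hp : IsAddr s' p) : IsAddr s p := by
  refine hp.of_modAt (fun u u' hu p hp => ?_) h
  rcases u with _ | l
  · simp [popStk] at hu
  by_cases hl : 2 ≤ l.length
  · simp only [popStk, if_pos hl, Option.some.injEq] at hu
    subst hu
    rcases p with _ | ⟨j, p⟩
    · exact ⟨_, rfl⟩
    rw [isAddr_node_cons] at hp ⊢
    obtain ⟨t, hj, hp⟩ := hp
    rw [List.getElem?_dropLast] at hj
    split_ifs at hj
    exact ⟨t, hj, hp⟩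
  · simp [popStk, hl] at hu

lemma dupTop_eq_some {r : ℕ} {γ : Γ} {u u' : St Γ} (h : dupTop r γ u = some u') :
    ∃ l t t', u = St.node l ∧ l.getLast? = some t ∧ (∀ p, IsAddr t' p → IsAddr t p) ∧
      u' = St.node (l ++ [t']) := by
  rcases u with _ | l
  · simp [dupTop] at h
  rcases hg : l.getLast? with _ | t
  · simp [dupTop, hg] at h
  simp only [dupTop, hg] at h
  split at h
  · simp at h
  rename_i t' hm
  refine ⟨l, t, t', rfl, hg, fun p hp => IsAddr.of_modAt (fun v v' hv p hp => ?_) hm hp,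
    (Option.some.inj h).symm⟩
  rcases v with _ | _
  · cases hv
    rcases p with _ | _
    · exact ⟨_, rfl⟩
    · simp [IsAddr, sub?] at hp
  · simp at hv

lemma sizeAt_modAt_dupTop {s s' : St Γ} {q : List ℕ} {r : ℕ} {γ : Γ}
    (h : modAt s q (dupTop r γ) = some s') :
    0 < sizeAt s q ∧ sizeAt s' q = sizeAt s q + 1 := by
  obtain ⟨u, u', h1, h2, h3⟩ := sub?_modAt h
  obtain ⟨l, t, t', rfl, hg, -, rfl⟩ := dupTop_eq_some h2
  have hne : l ≠ [] := by rintro rfl; simp at hg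
  simp [sizeAt, h1, h3, List.length_pos_iff.mpr hne]

/-- Where the address `p` after a push at `q` comes from, `sz` being the size at `q` before the
push: the new copy (index `sz`) originates from the copied component (index `sz - 1`). -/
def pushOrigin (q : List ℕ) (sz : ℕ) (p : List ℕ) : List ℕ :=
  if p.take (q.length + 1) = q ++ [sz] then p.set q.length (sz - 1) else p

lemma pushOrigin_nil_cons (sz j : ℕ) (p : List ℕ) :
    pushOrigin [] sz (j :: p) = if j = sz then (sz - 1) :: p else j :: p := by
  by_cases h : j = sz <;> simp [pushOrigin, h]

lemma pushOrigin_cons_cons (i : ℕ) (q : List ℕ) (sz j : ℕ) (p : List ℕ) :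
    pushOrigin (i :: q) sz (j :: p) = if j = i then j :: pushOrigin q sz p else j :: p := by
  by_cases h : j = i
  · by_cases h' : p.take (q.length + 1) = q ++ [sz] <;> simp [pushOrigin, h, h']
  · simp [pushOrigin, h]

lemma IsAddr.of_modAt_dupTop {s s' : St Γ} {q p : List ℕ} {r : ℕ} {γ : Γ}
    (h : modAt s q (dupTop r γ) = some s') (hp : IsAddr s' p) :
    IsAddr s (pushOrigin q (sizeAt s q) p) := by
  induction q generalizing s s' p with
  | nil =>
    obtain ⟨l, t, t', rfl, hg, ht, rfl⟩ := dupTop_eq_some (by simpa [modAt] using h)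
    rcases p with _ | ⟨j, p⟩
    · exact ⟨_, rfl⟩
    have hsz : sizeAt (St.node l) [] = l.length := rfl
    rw [isAddr_node_cons] at hp
    obtain ⟨t₁, hj, hp⟩ := hp
    rw [hsz, pushOrigin_nil_cons]
    split_ifs with hjl
    · subst hjl
      rw [List.getElem?_concat_length] at hj
      cases hj
      exact isAddr_node_cons.mpr ⟨t, by rwa [← List.getLast?_eq_getElem?], ht p hp⟩
    · rw [List.getElem?_append_left] at hj
      · exact isAddr_node_cons.mpr ⟨t₁, hj, hp⟩
      · by_contra hlt
        rw [List.getElem?_append_right (by omega), List.getElem?_eq_none (by simp; omega)] at hj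
        cases hj
  | cons i q ih =>
    obtain ⟨l, t, t', rfl, hi, hm, rfl⟩ := modAt_cons_eq_some h
    rcases p with _ | ⟨j, p⟩
    · exact ⟨_, rfl⟩
    rw [sizeAt_node_cons hi, pushOrigin_cons_cons]
    rcases isAddr_set_cons hi hp with ⟨rfl, hj⟩ | ⟨hij, hj⟩
    · rw [if_pos rfl]
      exact isAddr_node_cons.mpr ⟨t, hi, ih hm hj⟩
    · rwa [if_neg hij]

lemma pushOrigin_append_singleton (q w : List ℕ) (sz c : ℕ) :
    pushOrigin q sz (w ++ [c]) = pushOrigin q sz w ++ [c] ∨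
      (w = q ∧ c = sz ∧ pushOrigin q sz w = w ∧ pushOrigin q sz (w ++ [c]) = w ++ [sz - 1]) := by
  unfold pushOrigin
  rcases Nat.lt_trichotomy q.length w.length with hlt | heq | hgt
  · left
    rw [List.take_append_of_le_length (by omega)]
    split_ifs
    · rw [List.set_append, if_pos hlt]
    · rfl
  · have hw : w.take (q.length + 1) = w := List.take_of_length_le (by omega)
    have hwc : (w ++ [c]).take (q.length + 1) = w ++ [c] :=
      List.take_of_length_le (by simp; omega)
    have hne : w ≠ q ++ [sz] := fun h => by simp [h] at heq
    rw [hw, hwc, if_neg hne]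
    by_cases hcond : w = q ∧ c = sz
    · obtain ⟨rfl, rfl⟩ := hcond
      right
      simp
    · left
      rw [if_neg fun h => hcond (by simpa using List.append_inj h (by omega))]
  · left
    have hlen : ∀ v : List ℕ, v.length ≤ w.length + 1 → v.take (q.length + 1) ≠ q ++ [sz] :=
      fun v hv h => by have := congrArg List.length h; simp at this; omega
    rw [if_neg (hlen _ (by simp)), if_neg (hlen _ (by omega))]

end Modify

namespace InfRun

variable {n : ℕ} {A Γ : Type} {D : DPDA n A Γ} (R : InfRun D)

def stack (σ : ℕ) : St Γ := (R.cfg σ).2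

def stepHist (σ : ℕ) : List ℕ → List ℕ := (R.sub σ (σ + 1)).stepHist 0

lemma isValid_stack (σ : ℕ) : IsValid n (R.stack σ) := by
  have h := R.ok σ
  unfold stack
  generalize R.cfg σ = c, R.cfg (σ + 1) = c', R.lab σ = a at h
  cases h <;> assumption

lemma stepHist_cases (σ : ℕ) :
    (R.stack (σ + 1) = R.stack σ ∧ R.stepHist σ = id) ∨
    (∃ q, modAt (R.stack σ) q popStk = some (R.stack (σ + 1)) ∧ R.stepHist σ = id) ∨
    (∃ m r γ, m ≤ n ∧
      modAt (R.stack σ) (topAddr (R.stack σ) m) (dupTop r γ) = some (R.stack (σ + 1)) ∧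
      R.stepHist σ = pushOrigin (topAddr (R.stack σ) m)
        (sizeAt (R.stack σ) (topAddr (R.stack σ) m))) := by
  have hv := R.isValid_stack σ
  have h := R.ok σ
  simp only [stepHist, Run.stepHist, InfRun.sub, stack, Nat.add_zero] at hv ⊢
  generalize R.cfg σ = c, R.cfg (σ + 1) = c', R.lab σ = a at h hv ⊢
  cases h with
  | read a _ htl hδ => left; simp [htl, hδ]
  | @op _ _ _ _ _ o _ htl hδ happ =>
    cases o with
    | pop k =>
      simp only [applyOp, popOp] at happ
      split_ifs at happ
      exact Or.inr (Or.inl ⟨_, happ, by simp [htl, hδ]; rfl⟩)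
    | push k γ =>
      simp only [applyOp, pushOp] at happ
      split_ifs at happ
      refine Or.inr (Or.inr ⟨n - k, k, γ, Nat.sub_le n k, happ, ?_⟩)
      funext p
      simp [htl, hδ, histStep, pushOrigin, hv.length_topAddr (Nat.sub_le n k)]

lemma length_stepHist (σ : ℕ) (p : List ℕ) : (R.stepHist σ p).length = p.length := by
  rcases R.stepHist_cases σ with ⟨-, h⟩ | ⟨q, -, h⟩ | ⟨m, r, γ, -, -, h⟩ <;> rw [h]
  · rfl
  · rfl
  · unfold pushOrigin; split_ifs <;> simp

lemma isAddr_stepHist {σ : ℕ} {p : List ℕ} (hp : IsAddr (R.stack (σ + 1)) p) :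
    IsAddr (R.stack σ) (R.stepHist σ p) := by
  rcases R.stepHist_cases σ with ⟨hs, h⟩ | ⟨q, hq, h⟩ | ⟨m, r, γ, -, hq, h⟩ <;> rw [h]
  · exact hs ▸ hp
  · exact hp.of_modAt_popStk hq
  · exact hp.of_modAt_dupTop hq

/-- In the second case `w ++ [c]` lies in the new copy made by a push, which originates from the
copied component. -/
lemma stepHist_append_singleton (σ : ℕ) (w : List ℕ) (c : ℕ) :
    R.stepHist σ (w ++ [c]) = R.stepHist σ w ++ [c] ∨
      (R.stepHist σ w = w ∧ R.stepHist σ (w ++ [c]) = w ++ [c - 1] ∧ 0 < c ∧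
        w = topAddr (R.stack σ) w.length ∧ c = sizeAt (R.stack σ) w ∧
        sizeAt (R.stack (σ + 1)) w = c + 1) := by
  rcases R.stepHist_cases σ with ⟨-, h⟩ | ⟨q, -, h⟩ | ⟨m, r, γ, hm, hq, h⟩
  · simp [h]
  · simp [h]
  rw [h]
  rcases pushOrigin_append_singleton (topAddr (R.stack σ) m) w
    (sizeAt (R.stack σ) (topAddr (R.stack σ) m)) c with h' | ⟨rfl, rfl, h₁, h₂⟩
  · exact Or.inl h'
  obtain ⟨hpos, hsize⟩ := sizeAt_modAt_dupTop hq
  exact Or.inr ⟨h₁, h₂, hpos, by rw [(R.isValid_stack σ).length_topAddr hm], rfl, hsize⟩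

lemma exists_stepHist_append_singleton (σ : ℕ) (w : List ℕ) (c : ℕ) :
    ∃ c', R.stepHist σ (w ++ [c]) = R.stepHist σ w ++ [c'] ∧ c' ≤ c ∧ c ≤ c' + 1 := by
  rcases R.stepHist_append_singleton σ w c with h | ⟨h₁, h₂, hc, -⟩
  · exact ⟨c, h, le_rfl, by omega⟩
  · exact ⟨c - 1, by rw [h₂, h₁], by omega, by omega⟩

lemma stepHist_append_singleton_mono (σ : ℕ) (w : List ℕ) {c d : ℕ} (hcd : c ≤ d) :
    ∃ c' d', R.stepHist σ (w ++ [c]) = R.stepHist σ w ++ [c'] ∧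
      R.stepHist σ (w ++ [d]) = R.stepHist σ w ++ [d'] ∧ c' ≤ d' := by
  obtain ⟨c', hc, hc₁, -⟩ := R.exists_stepHist_append_singleton σ w c
  obtain ⟨d', hd, -, hd₂⟩ := R.exists_stepHist_append_singleton σ w d
  refine ⟨c', d', hc, hd, ?_⟩
  rcases hcd.eq_or_lt with rfl | hlt
  · rw [hc, List.append_cancel_left_eq, List.singleton_inj] at hd
    exact hd.le
  · omega

/-- `R.histTo i j p` is the address in `R(i)` from which the address `p` of `R(j)` originates. -/
def histTo (R : InfRun D) (i : ℕ) : ℕ → List ℕ → List ℕ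
  | 0, p => p
  | j + 1, p => if j + 1 ≤ i then p else R.histTo i j (R.stepHist j p)

lemma histTo_of_le {i j : ℕ} (h : j ≤ i) (p : List ℕ) : R.histTo i j p = p := by
  cases j with
  | zero => rfl
  | succ j => rw [histTo, if_pos h]

@[simp] lemma histTo_self (i : ℕ) (p : List ℕ) : R.histTo i i p = p :=
  R.histTo_of_le le_rfl p

lemma histTo_succ {i j : ℕ} (h : i ≤ j) (p : List ℕ) :
    R.histTo i (j + 1) p = R.histTo i j (R.stepHist j p) := by
  rw [histTo, if_neg (by omega)]

lemma histTo_trans {i m j : ℕ} (him : i ≤ m) (hmj : m ≤ j) (p : List ℕ) :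
    R.histTo i j p = R.histTo i m (R.histTo m j p) := by
  induction j, hmj using Nat.le_induction generalizing p with
  | base => rw [histTo_self]
  | succ j hmj ih => rw [R.histTo_succ (by omega), R.histTo_succ hmj, ih]

lemma histTo_of_lt {i j : ℕ} (h : i < j) (p : List ℕ) :
    R.histTo i j p = R.stepHist i (R.histTo (i + 1) j p) := by
  rw [R.histTo_trans (Nat.le_succ i) h, R.histTo_succ le_rfl, histTo_self]

lemma length_histTo (i j : ℕ) (p : List ℕ) : (R.histTo i j p).length = p.length := by
  induction j generalizing p with
  | zero => rfl
  | succ j ih =>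
    rw [histTo]
    split_ifs
    · rfl
    · rw [ih, length_stepHist]

lemma isAddr_histTo {i j : ℕ} (hij : i ≤ j) {p : List ℕ} (hp : IsAddr (R.stack j) p) :
    IsAddr (R.stack i) (R.histTo i j p) := by
  induction j, hij using Nat.le_induction generalizing p with
  | base => rwa [histTo_self]
  | succ j hij ih => rw [R.histTo_succ hij]; exact ih (R.isAddr_stepHist hp)

lemma exists_histTo_append_singleton (i j : ℕ) (w : List ℕ) (c : ℕ) :
    ∃ c' ≤ c, R.histTo i j (w ++ [c]) = R.histTo i j w ++ [c'] := by
  induction j generalizing w c with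
  | zero => exact ⟨c, le_rfl, rfl⟩
  | succ j ih =>
    by_cases hij : j + 1 ≤ i
    · exact ⟨c, le_rfl, by simp only [histTo, if_pos hij]⟩
    obtain ⟨c₁, h₁, hc₁, -⟩ := R.exists_stepHist_append_singleton j w c
    obtain ⟨c', hc', h'⟩ := ih (R.stepHist j w) c₁
    exact ⟨c', by omega, by simp only [histTo, if_neg hij, h₁, h']⟩

lemma histTo_append_singleton_mono (i j : ℕ) (w : List ℕ) {c d : ℕ} (hcd : c ≤ d) :
    ∃ c' d', R.histTo i j (w ++ [c]) = R.histTo i j w ++ [c'] ∧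
      R.histTo i j (w ++ [d]) = R.histTo i j w ++ [d'] ∧ c' ≤ d' := by
  induction j generalizing w c d with
  | zero => exact ⟨c, d, rfl, rfl, hcd⟩
  | succ j ih =>
    by_cases hij : j + 1 ≤ i
    · exact ⟨c, d, by simp only [histTo, if_pos hij], by simp only [histTo, if_pos hij], hcd⟩
    obtain ⟨c₁, d₁, hc₁, hd₁, hcd₁⟩ := R.stepHist_append_singleton_mono j w hcd
    obtain ⟨c', d', hc', hd', hcd'⟩ := ih (R.stepHist j w) hcd₁
    exact ⟨c', d', by simp only [histTo, if_neg hij, hc₁, hc'],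
      by simp only [histTo, if_neg hij, hd₁, hd'], hcd'⟩

lemma histTo_sub (i j t : ℕ) (p : List ℕ) : (R.sub i j).histTo 0 t p = R.histTo i (i + t) p := by
  induction t generalizing p with
  | zero => rw [histTo_of_le R (by omega)]; rfl
  | succ t ih =>
    rw [Run.histTo, if_neg (by omega), ih, ← Nat.add_assoc, R.histTo_succ (by omega)]
    rfl

lemma isUpper_sub_iff {i j : ℕ} (hij : i ≤ j) (k : ℕ) :
    (R.sub i j).IsUpper k ↔
      R.histTo i j (topAddr (R.stack j) (n - k)) = topAddr (R.stack i) (n - k) := by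
  obtain ⟨t, rfl⟩ := Nat.exists_eq_add_of_le hij
  unfold Run.IsUpper
  rw [show (R.sub i (i + t)).len = t by simp [InfRun.sub], histTo_sub]
  rfl

def shift (β : ℕ) : InfRun D :=
  ⟨fun σ => R.cfg (β + σ), fun σ => R.lab (β + σ), fun σ => R.ok (β + σ)⟩

lemma stack_shift (β σ : ℕ) : (R.shift β).stack σ = R.stack (β + σ) := rfl

lemma histTo_shift (β i j : ℕ) (p : List ℕ) :
    (R.shift β).histTo i j p = R.histTo (β + i) (β + j) p := by
  induction j generalizing p with
  | zero => rw [histTo_of_le _ (by omega), histTo_of_le _ (by omega)]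
  | succ j ih =>
    by_cases hj : j + 1 ≤ i
    · rw [histTo_of_le _ hj, histTo_of_le _ (by omega)]
    · rw [histTo_succ _ (by omega), ih, ← Nat.add_assoc, R.histTo_succ (by omega)]
      rfl

/-- The address of the topmost `(n - ℓ)`-stack of `R(σ)`. -/
def top (ℓ σ : ℕ) : List ℕ := topAddr (R.stack σ) ℓ

def topIdx (ℓ σ : ℕ) : ℕ := sizeAt (R.stack σ) (R.top ℓ σ) - 1

/-- The last coordinate of the origin in `R(σ)` of the address `R.top ℓ b ++ [c]` of `R(b)`. -/
def histIdx (ℓ b σ c : ℕ) : ℕ := (R.histTo σ b (R.top ℓ b ++ [c])).getLastD 0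

variable {ℓ : ℕ}

lemma length_top (hℓ : ℓ ≤ n) (σ : ℕ) : (R.top ℓ σ).length = ℓ :=
  (R.isValid_stack σ).length_topAddr hℓ

lemma top_succ (hℓ : ℓ < n) (σ : ℕ) : R.top (ℓ + 1) σ = R.top ℓ σ ++ [R.topIdx ℓ σ] :=
  (R.isValid_stack σ).topAddr_succ hℓ

lemma histTo_top_append (ℓ b σ c : ℕ) :
    R.histTo σ b (R.top ℓ b ++ [c]) = R.histTo σ b (R.top ℓ b) ++ [R.histIdx ℓ b σ c] := by
  obtain ⟨c', -, h⟩ := R.exists_histTo_append_singleton σ b (R.top ℓ b) c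
  rw [histIdx, h, List.getLastD_concat]

@[simp] lemma histIdx_self (ℓ b c : ℕ) : R.histIdx ℓ b b c = c := by
  rw [histIdx, histTo_self, List.getLastD_concat]

lemma histIdx_mono (ℓ b σ : ℕ) {c d : ℕ} (hcd : c ≤ d) : R.histIdx ℓ b σ c ≤ R.histIdx ℓ b σ d := by
  obtain ⟨c', d', hc, hd, h⟩ := R.histTo_append_singleton_mono σ b (R.top ℓ b) hcd
  simpa [histIdx, hc, hd] using h

lemma histIdx_le_histIdx_of_le {b σ σ' : ℕ} (h₁ : σ ≤ σ') (h₂ : σ' ≤ b) (c : ℕ) :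
    R.histIdx ℓ b σ c ≤ R.histIdx ℓ b σ' c := by
  obtain ⟨c', hc', h⟩ := R.exists_histTo_append_singleton σ σ'
    (R.histTo σ' b (R.top ℓ b)) (R.histIdx ℓ b σ' c)
  rw [histIdx, R.histTo_trans h₁ h₂, histTo_top_append, h, List.getLastD_concat]
  exact hc'

lemma histIdx_trans {b m σ : ℕ} (h₁ : σ ≤ m) (h₂ : m ≤ b)
    (hm : R.histTo m b (R.top ℓ b) = R.top ℓ m) (c : ℕ) :
    R.histIdx ℓ b σ c = R.histIdx ℓ m σ (R.histIdx ℓ b m c) := by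
  rw [histIdx, R.histTo_trans h₁ h₂, histTo_top_append, hm, histTo_top_append,
    List.getLastD_concat]

/-- The traced coordinate drops exactly when the step is a push whose new copy contains the
traced address. -/
lemma histIdx_step (hℓ : ℓ < n) {σ b : ℕ} (h : σ < b) (c : ℕ) :
    R.histIdx ℓ b σ c = R.histIdx ℓ b (σ + 1) c ∨
      (R.histIdx ℓ b σ c + 1 = R.histIdx ℓ b (σ + 1) c ∧
        R.histTo σ b (R.top ℓ b ++ [c]) = R.top (ℓ + 1) σ ∧
        sizeAt (R.stack (σ + 1)) (R.histTo (σ + 1) b (R.top ℓ b)) =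
          R.histIdx ℓ b (σ + 1) c + 1) := by
  have hP : (R.histTo (σ + 1) b (R.top ℓ b)).length = ℓ := by
    rw [length_histTo, R.length_top hℓ.le]
  have hσ : R.histTo σ b (R.top ℓ b ++ [c]) =
      R.stepHist σ (R.histTo (σ + 1) b (R.top ℓ b) ++ [R.histIdx ℓ b (σ + 1) c]) := by
    rw [R.histTo_of_lt h, histTo_top_append]
  rcases R.stepHist_append_singleton σ _ (R.histIdx ℓ b (σ + 1) c) with
    h' | ⟨-, h', hpos, htop, hsz, hsz'⟩
  · left
    rw [histIdx, hσ, h', List.getLastD_concat]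
  · right
    rw [hP] at htop
    have hidx : R.histIdx ℓ b (σ + 1) c - 1 = R.topIdx ℓ σ := by
      rw [topIdx, top, ← htop, ← hsz]
    refine ⟨?_, ?_, hsz'⟩
    · rw [histIdx, hσ, h', List.getLastD_concat]
      omega
    · rw [hσ, h', hidx, R.top_succ hℓ, htop]
      rfl

lemma histIdx_topIdx_lt (hℓ : ℓ < n) {σ b : ℕ} (h : σ ≤ b) :
    R.histIdx ℓ b σ (R.topIdx ℓ b) < sizeAt (R.stack σ) (R.histTo σ b (R.top ℓ b)) := by
  obtain ⟨u, hu, -⟩ := (R.isValid_stack b).exists_sub?_topAddr (d := ℓ + 1) hℓ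
  obtain ⟨v, hv⟩ := R.isAddr_histTo h (p := R.top (ℓ + 1) b) ⟨u, hu⟩
  rw [R.top_succ hℓ, histTo_top_append] at hv
  exact lt_sizeAt_of_sub?_append_singleton hv

lemma histIdx_topIdx_le (hℓ : ℓ < n) {σ b : ℕ} (h : σ ≤ b)
    (hσ : R.histTo σ b (R.top ℓ b) = R.top ℓ σ) :
    R.histIdx ℓ b σ (R.topIdx ℓ b) ≤ R.topIdx ℓ σ := by
  have hlt := R.histIdx_topIdx_lt hℓ h
  rw [hσ] at hlt
  exact Nat.le_sub_one_of_lt hlt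

lemma exists_last_histIdx_topIdx_eq (hℓ : ℓ < n) {a b e : ℕ} (hab : a ≤ b)
    (ha : R.histIdx ℓ b a (R.topIdx ℓ b) ≤ e) (hb : e ≤ R.topIdx ℓ b) :
    ∃ σ, a ≤ σ ∧ σ ≤ b ∧ R.histIdx ℓ b σ (R.topIdx ℓ b) = e ∧
      R.histTo σ b (R.top (ℓ + 1) b) = R.top (ℓ + 1) σ ∧
      ∀ σ', σ < σ' → σ' ≤ b → e < R.histIdx ℓ b σ' (R.topIdx ℓ b) := by
  obtain ⟨σ, h₁, h₂, hσ, hgt⟩ := exists_last_eq_of_le_succ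
    (f := fun σ => R.histIdx ℓ b σ (R.topIdx ℓ b)) hab
    (fun σ hσ => by rcases R.histIdx_step hℓ hσ (R.topIdx ℓ b) with h | ⟨h, -⟩ <;> omega)
    ha (by simpa using hb)
  refine ⟨σ, h₁, h₂, hσ, ?_, hgt⟩
  rcases h₂.eq_or_lt with rfl | hlt
  · exact R.histTo_self σ _
  rcases R.histIdx_step hℓ hlt (R.topIdx ℓ b) with heq | ⟨-, htop, -⟩
  · have := hgt (σ + 1) (Nat.lt_succ_self σ) hlt
    omega
  · rwa [R.top_succ hℓ b]

/-- A coordinate `e` below the traced top coordinate during `(σ, b]` is never the new copy of a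
push there, so its origin keeps the coordinate `e`. -/
lemma histIdx_eq_of_lt (hℓ : ℓ < n) {σ b e : ℕ} (hσ : σ ≤ b)
    (hgt : ∀ σ', σ < σ' → σ' ≤ b → e < R.histIdx ℓ b σ' (R.topIdx ℓ b)) :
    R.histIdx ℓ b σ e = e := by
  induction hσ using Nat.decreasingInduction with
  | self => exact R.histIdx_self ℓ b e
  | of_succ σ hσ ih =>
    have ih := ih fun σ' h₁ h₂ => hgt σ' (by omega) h₂
    rcases R.histIdx_step hℓ hσ e with heq | ⟨-, -, hsz⟩
    · rw [heq, ih]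
    · have h₁ := R.histIdx_topIdx_lt hℓ (show σ + 1 ≤ b from hσ)
      have h₂ := hgt (σ + 1) (Nat.lt_succ_self σ) hσ
      rw [ih] at hsz
      omega

/-- Every subrun `R[g t, g u]`, `t < u`, is `(n - ℓ)`-upper. -/
def PairwiseUpper (ℓ : ℕ) (g : ℕ → ℕ) : Prop :=
  ∀ t u, t < u → R.histTo (g t) (g u) (R.top ℓ (g u)) = R.top ℓ (g t)

lemma pairwiseUpper_zero (g : ℕ → ℕ) : R.PairwiseUpper 0 g := fun t u _ => by
  have hnil : ∀ σ, R.top 0 σ = [] := fun σ => by simp [top, topAddr]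
  rw [hnil, hnil]
  exact List.eq_nil_of_length_eq_zero (R.length_histTo _ _ _)

variable {R}

lemma PairwiseUpper.histIdx_topIdx_antitone (hℓ : ℓ < n) {g : ℕ → ℕ} (hg : StrictMono g)
    (hup : R.PairwiseUpper ℓ g) {t u u' : ℕ} (htu : t < u) (huu' : u ≤ u') :
    R.histIdx ℓ (g u') (g t) (R.topIdx ℓ (g u')) ≤ R.histIdx ℓ (g u) (g t) (R.topIdx ℓ (g u)) := by
  rcases huu'.eq_or_lt with rfl | hlt
  · exact le_rfl
  rw [R.histIdx_trans (hg.monotone htu.le) (hg.monotone hlt.le) (hup u u' hlt)]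
  exact R.histIdx_mono _ _ _ (R.histIdx_topIdx_le hℓ (hg.monotone hlt.le) (hup u u' hlt))

lemma PairwiseUpper.succ_of_stable (hℓ : ℓ < n) {g : ℕ → ℕ} (hg : StrictMono g)
    (hup : R.PairwiseUpper ℓ g)
    (hstab : ∀ t u u', t < u → u < u' → R.histIdx ℓ (g u) (g t) (R.topIdx ℓ (g u)) =
      R.histIdx ℓ (g u') (g t) (R.topIdx ℓ (g u'))) :
    ∃ g', StrictMono g' ∧ R.PairwiseUpper (ℓ + 1) g' := by
  set E : ℕ → ℕ := fun t => R.histIdx ℓ (g (t + 1)) (g t) (R.topIdx ℓ (g (t + 1)))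
  have hE : ∀ t u, t < u → R.histIdx ℓ (g u) (g t) (R.topIdx ℓ (g u)) = E t := by
    intro t u htu
    rcases (Nat.succ_le_of_lt htu).eq_or_lt with rfl | h
    · rfl
    · exact (hstab t (t + 1) u (by omega) h).symm
  have hE_le : ∀ t, E t ≤ R.topIdx ℓ (g t) := fun t =>
    R.histIdx_topIdx_le hℓ (hg.monotone (by omega)) (hup t (t + 1) (by omega))
  have hE_succ : ∀ t, E t ≤ E (t + 1) := fun t => by
    rw [← hE t (t + 2) (by omega), ← hE (t + 1) (t + 2) (by omega)]
    exact R.histIdx_le_histIdx_of_le (hg.monotone (by omega)) (hg.monotone (by omega)) _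
  have hκ := fun u => R.exists_last_histIdx_topIdx_eq hℓ (hg.monotone (Nat.le_succ u))
    (by rw [hE u (u + 1) (by omega)]; exact hE_succ u) (hE_le (u + 1))
  choose κ hκ_ge hκ_le hκ_eq hκ_top hκ_gt using hκ
  have hpair : ∀ u u', u < u' →
      R.histTo (κ u) (κ u') (R.top (ℓ + 1) (κ u')) = R.top (ℓ + 1) (κ u) := by
    intro u u' huu'
    have hκb : κ u ≤ g (u + 1) := hκ_le u
    have hbκ : g (u + 1) ≤ κ u' := (hg.monotone (by omega : u + 1 ≤ u')).trans (hκ_ge u')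
    have hfrozen := R.histIdx_eq_of_lt hℓ hκb (hκ_gt u)
    calc R.histTo (κ u) (κ u') (R.top (ℓ + 1) (κ u'))
        = R.histTo (κ u) (g (u + 1)) (R.histTo (g (u + 1)) (g (u' + 1))
            (R.top ℓ (g (u' + 1)) ++ [R.topIdx ℓ (g (u' + 1))])) := by
          rw [← hκ_top u', ← R.histTo_trans (hκb.trans hbκ) (hκ_le u'), R.top_succ hℓ,
            R.histTo_trans hκb (hbκ.trans (hκ_le u'))]
      _ = R.histTo (κ u) (g (u + 1)) (R.top ℓ (g (u + 1)) ++ [E (u + 1)]) := by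
          rw [histTo_top_append, hup (u + 1) (u' + 1) (by omega), hE (u + 1) (u' + 1) (by omega)]
      _ = R.top (ℓ + 1) (κ u) := by
          rw [histTo_top_append, hfrozen, ← hκ_eq, ← histTo_top_append, ← R.top_succ hℓ, hκ_top]
  refine ⟨fun s => κ (2 * s), strictMono_nat_of_lt_succ fun s => ?_,
    fun t u htu => hpair _ _ (by omega)⟩
  calc κ (2 * s) ≤ g (2 * s + 1) := hκ_le _
    _ < g (2 * s + 2) := hg (by omega)
    _ ≤ κ (2 * (s + 1)) := hκ_ge _

lemma PairwiseUpper.succ (hℓ : ℓ < n) {g : ℕ → ℕ} (hg : StrictMono g)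
    (hup : R.PairwiseUpper ℓ g) : ∃ g', StrictMono g' ∧ R.PairwiseUpper (ℓ + 1) g' := by
  have hM : ∀ t, ∃ M, ∀ u, M ≤ u → R.histIdx ℓ (g u) (g t) (R.topIdx ℓ (g u)) =
      R.histIdx ℓ (g M) (g t) (R.topIdx ℓ (g M)) := by
    intro t
    obtain ⟨N, hN⟩ := WellFoundedLT.antitone_chain_condition
      (f := fun m => R.histIdx ℓ (g (t + 1 + m)) (g t) (R.topIdx ℓ (g (t + 1 + m))))
      fun m m' h => hup.histIdx_topIdx_antitone hℓ hg (by omega) (by omega)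
    refine ⟨t + 1 + N, fun u hu => ?_⟩
    obtain ⟨m, rfl⟩ : ∃ m, u = t + 1 + m := ⟨u - (t + 1), by omega⟩
    exact (hN m (by omega)).symm
  choose M hM using hM
  obtain ⟨h, hh, hMh⟩ := exists_strictMono_forall_le M
  refine succ_of_stable hℓ (hg.comp hh) (fun t u htu => hup _ _ (hh htu))
    fun t u u' htu huu' => ?_
  simp only [Function.comp_apply]
  rw [hM _ _ (hMh t u htu), hM _ _ (hMh t u' (htu.trans huu'))]

variable (R)

lemma exists_pairwiseUpper (ℓ : ℕ) (hℓ : ℓ ≤ n) : ∃ g, StrictMono g ∧ R.PairwiseUpper ℓ g := by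
  induction ℓ with
  | zero => exact ⟨id, strictMono_id, R.pairwiseUpper_zero id⟩
  | succ ℓ ih =>
    obtain ⟨g, hg, hup⟩ := ih (by omega)
    exact hup.succ (by omega) hg

variable {R}

lemma milestone_of_pairwiseUpper {star : A} (hw : ∀ i, OnlyStar star (R.lab i)) {g : ℕ → ℕ}
    (hg : StrictMono g) (hup : R.PairwiseUpper n g) (t : ℕ) : Milestone star (R.cfg (g t)) := by
  have hgt : ∀ u, g t ≤ g (t + u) := fun u => hg.monotone (by omega)
  refine ⟨R.shift (g t), rfl, fun i => hw _, Set.range fun u => g (t + u) - g t,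
    Set.infinite_range_of_injective fun u v huv => ?_, ⟨0, by simp⟩, ?_⟩
  · have := hgt u
    have := hgt v
    exact Nat.add_left_cancel (hg.injective (show g (t + u) = g (t + v) by omega))
  rintro _ ⟨a, rfl⟩ _ ⟨b, rfl⟩ hab
  have ha := hgt a
  have hb := hgt b
  have hab' : t + a ≤ t + b := hg.le_iff_le.mp (by simp only at hab; omega)
  rw [isUpper_sub_iff _ hab, Nat.sub_zero, histTo_shift, stack_shift, stack_shift,
    Nat.add_sub_cancel' ha, Nat.add_sub_cancel' hb]
  rcases hab'.eq_or_lt with h | h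
  · rw [h, histTo_self]
  · exact hup _ _ h

end InfRun

theorem statement18_general {n : ℕ} {A Γ : Type}
    {D : DPDA n A Γ} (star : A) (R : InfRun D)
    (hw : ∀ i, OnlyStar star (R.lab i)) :
    {i : ℕ | Milestone star (R.cfg i)}.Infinite := by
  obtain ⟨g, hg, hup⟩ := R.exists_pairwiseUpper n le_rfl
  exact Set.infinite_of_injective_forall_mem hg.injective
    (InfRun.milestone_of_pairwiseUpper hw hg hup)

/-- Let `D` be an `n`-DPDA whose input alphabet contains a
distinguished symbol `⋆`.  If `R` is an infinite run of `D` reading only `⋆` symbols,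
then `R(i)` is a milestone configuration for infinitely many indices `i`. -/
theorem statement18 {n : ℕ} (hn : 1 ≤ n) {A Γ : Type} [Finite A] [Finite Γ]
    {D : DPDA n A Γ} (star : A) (R : InfRun D)
    (hw : ∀ i, OnlyStar star (R.lab i)) :
    {i : ℕ | Milestone star (R.cfg i)}.Infinite :=
  statement18_general star R hw

end HOPDA
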